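/- Let G3(X,Y,Z) = Y^3*Z - Y*Z^3 - (X^2+Z^2)^2, regarded over an algebraic closure K of F_3. Then there is no nonzero vector (x,y,z) in K^3 at which G3 and all three partial derivatives ∂G3/∂X, ∂G3/∂Y, ∂G3/∂Z vanish simultaneously; that is, G3 defines a nonsingular plane quartic curve. -/

import Mathlib

/-!
In characteristic 3 the partial derivatives reduce to `∂G3/∂Y = -Z³` and
`∂G3/∂Z = Y³ - Z (X² + Z²)`. At a singular point the first forces `Z = 0`, then the second
forces `Y = 0`, and then `G3 = -X⁴` forces `X = 0`.
-/

open MvPolynomial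

/-- The plane quartic `G3` over the algebraic closure of `𝔽₃`. -/
noncomputable def G3polyBar : MvPolynomial (Fin 3) (AlgebraicClosure (ZMod 3)) :=
  (X 1) ^ 3 * X 2 - X 1 * (X 2) ^ 3 - ((X 0) ^ 2 + (X 2) ^ 2) ^ 2

section

variable (v : Fin 3 → AlgebraicClosure (ZMod 3))

theorem eval_G3polyBar :
    eval v G3polyBar = v 1 ^ 3 * v 2 - v 1 * v 2 ^ 3 - (v 0 ^ 2 + v 2 ^ 2) ^ 2 := by
  simp [G3polyBar]

theorem eval_pderiv_one_G3polyBar : eval v (pderiv 1 G3polyBar) = -v 2 ^ 3 := by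
  simp [G3polyBar, pderiv_X, -sub_eq_neg_self]
  linear_combination v 1 ^ 2 * v 2 * CharP.ofNat_eq_zero (AlgebraicClosure (ZMod 3)) 3

theorem eval_pderiv_two_G3polyBar :
    eval v (pderiv 2 G3polyBar) = v 1 ^ 3 - v 2 * (v 0 ^ 2 + v 2 ^ 2) := by
  simp [G3polyBar, pderiv_X]
  linear_combination (-(v 1 * v 2 ^ 2) - v 2 * (v 0 ^ 2 + v 2 ^ 2)) *
    CharP.ofNat_eq_zero (AlgebraicClosure (ZMod 3)) 3

end

theorem stmt_14 :
    ¬ ∃ v : Fin 3 → AlgebraicClosure (ZMod 3), v ≠ 0 ∧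
      eval v G3polyBar = 0 ∧ ∀ i : Fin 3, eval v (pderiv i G3polyBar) = 0 := by
  rintro ⟨v, hv, hG, hd⟩
  have hz : v 2 = 0 := by
    have h := hd 1
    rw [eval_pderiv_one_G3polyBar, neg_eq_zero] at h
    exact pow_eq_zero_iff three_ne_zero |>.mp h
  have hy : v 1 = 0 := by
    have h := hd 2
    rw [eval_pderiv_two_G3polyBar, hz, zero_mul, sub_zero] at h
    exact pow_eq_zero_iff three_ne_zero |>.mp h
  have hx : v 0 = 0 := by
    rw [eval_G3polyBar, hy, hz] at hG
    simpa using hG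
  exact hv (funext fun i => by fin_cases i <;> assumption)
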